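/- Assume f_1,…,f_m satisfy the SNC hypothesis. Then for every point p ∈ ℂ^n ∖ {0}, the complex matrices Q(p) and Q_{∖1}(p), obtained by evaluating every entry of Q (respectively Q_{∖1}) at p, both have rank m. -/

import Mathlib

open MvPolynomial

noncomputable section

/-- The polynomial ring `R = ℂ[x_1,…,x_n]`. -/
abbrev Rp (n : ℕ) := MvPolynomial (Fin n) ℂ

/-- The polynomial ring `S = ℂ[s_1,…,s_m,x_1,…,x_n]`; `Sum.inl i ↦ s_i`, `Sum.inr j ↦ x_j`. -/
abbrev Sp (n m : ℕ) := MvPolynomial (Fin m ⊕ Fin n) ℂ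

/-- The inclusion `R ⊆ S`. -/
def toS (n m : ℕ) : Rp n →ₐ[ℂ] Sp n m := rename Sum.inr

/-- Column index set for `Q_{∖1}`: diagonal columns `2,…,m` and the `n` Jacobian columns. -/
abbrev Col (n m : ℕ) := {k : Fin m // (k : ℕ) ≠ 0} ⊕ Fin n

/-- The SNC (strict normal crossing) hypothesis, via the Jacobian criterion. -/
def SNC (n m : ℕ) (f : Fin m → Rp n) : Prop :=
  (∀ i, Irreducible (f i)) ∧
  ∀ I : Finset (Fin m), 1 ≤ I.card → I.card ≤ n →
    ∀ p : Fin n → ℂ, p ≠ 0 → (∀ i ∈ I, eval p (f i) = 0) →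
      (Matrix.of fun (i : I) (j : Fin n) => eval p (pderiv j (f i.1))).rank = I.card

/-- The matrix `Q = (diag(f_1,…,f_m) | J_f)`. -/
def Qmat (n m : ℕ) (f : Fin m → Rp n) : Matrix (Fin m) (Fin m ⊕ Fin n) (Rp n) :=
  Matrix.of fun i => Sum.elim (fun k => if i = k then f i else 0) (fun j => pderiv j (f i))

/-- The matrix `Q_{∖1}`, obtained from `Q` by deleting the first column. -/
def Q1 (n m : ℕ) (f : Fin m → Rp n) : Matrix (Fin m) (Col n m) (Rp n) :=
  Matrix.of fun i => Sum.elim (fun k => if i = (k : Fin m) then f i else 0)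
    (fun j => pderiv j (f i))

/-- The matrix `Q^s_{∖1}`: `Q_{∖1}` (over `S`) with the row `(s_2,…,s_m,0,…,0)` appended. -/
def Qs1 (n m : ℕ) (f : Fin m → Rp n) : Matrix (Option (Fin m)) (Col n m) (Sp n m) :=
  Matrix.of fun i? c =>
    i?.elim (Sum.elim (fun k : {k : Fin m // (k : ℕ) ≠ 0} => (X (Sum.inl (k : Fin m)) : Sp n m)) (fun _ : Fin n => (0 : Sp n m)) c)
      (fun i => toS n m (Q1 n m f i c))

/-- The ideal generated by all `k × k` minors of a matrix. -/
def minorsIdeal {A : Type*} [CommRing A] {ι κ : Type*} (k : ℕ) (M : Matrix ι κ A) : Ideal A :=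
  Ideal.span {x | ∃ r : Fin k → ι, ∃ c : Fin k → κ,
    Function.Injective r ∧ Function.Injective c ∧ x = (M.submatrix r c).det}

/-- `h_j = Σ_i s_i·(Π_{k≠i} f_k)·∂f_i/∂x_j`. -/
def hpoly (n m : ℕ) (f : Fin m → Rp n) (j : Fin n) : Sp n m :=
  ∑ i, X (Sum.inl i) * toS n m (((Finset.univ.erase i).prod f) * pderiv j (f i))

/-- The linear form `Σ_i d_i·s_i`. -/
def linForm (n m : ℕ) (d : Fin m → ℕ) : Sp n m := ∑ i, (d i : Sp n m) * X (Sum.inl i)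

/-- The likelihood ideal `I_A`: contraction to `S` of the ideal `⟨h_1,…,h_n⟩` of `S_f`. -/
def IA (n m : ℕ) (f : Fin m → Rp n) : Ideal (Sp n m) :=
  (Ideal.span (Set.range fun j =>
      algebraMap (Sp n m) (Localization.Away (toS n m (∏ i, f i))) (hpoly n m f j))).comap
    (algebraMap (Sp n m) (Localization.Away (toS n m (∏ i, f i))))


/-- Euler's identity for homogeneous multivariate polynomials. -/
lemma euler_poly {n dd : ℕ} (f : MvPolynomial (Fin n) ℂ) (hf : f.IsHomogeneous dd) :
    ∑ j, (X j : MvPolynomial (Fin n) ℂ) * pderiv j f = dd • f := by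
  have hmono : ∀ (s : Fin n →₀ ℕ) (a : ℂ),
      ∑ j, (X j : MvPolynomial (Fin n) ℂ) * pderiv j (monomial s a)
        = (∑ j, s j) • monomial s a := by
    intro s a
    rw [Finset.sum_smul]
    refine Finset.sum_congr rfl fun j _ => ?_
    rw [pderiv_monomial]
    rcases eq_or_ne (s j) 0 with h | h
    · simp [h]
    · have hle : Finsupp.single j 1 ≤ s := by
        rw [Finsupp.single_le_iff]; omega
      have h2 : (X j : MvPolynomial (Fin n) ℂ) * monomial (s - Finsupp.single j 1) (a * s j)
          = monomial s (a * s j) := by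
        rw [← pow_one (X j : MvPolynomial (Fin n) ℂ), ← monomial_single_add,
          add_tsub_cancel_of_le hle]
      rw [h2, ← map_nsmul (monomial s) (s j) a, nsmul_eq_mul, mul_comm]
  conv_lhs => rw [f.as_sum]
  simp_rw [map_sum, Finset.mul_sum]
  rw [Finset.sum_comm]
  have : ∀ s ∈ f.support, ∑ j, (X j : MvPolynomial (Fin n) ℂ) * pderiv j (monomial s (coeff s f))
      = dd • monomial s (coeff s f) := by
    intro s hs
    rw [hmono]
    congr 1
    have h1 : Finsupp.weight 1 s = dd := hf (mem_support_iff.mp hs)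
    have h2 : s.degree = Finsupp.weight 1 s := by rw [Finsupp.degree_eq_weight_one]; rfl
    have h3 : ∑ j, s j = s.degree :=
      (Finset.sum_subset (Finset.subset_univ _)
        (fun x _ hx => Finsupp.notMem_support_iff.mp hx)).symm
    omega
  rw [Finset.sum_congr rfl this, ← Finset.smul_sum, ← f.as_sum]

lemma euler_eval {n dd : ℕ} (f : MvPolynomial (Fin n) ℂ) (hf : f.IsHomogeneous dd)
    (p : Fin n → ℂ) : ∑ j, p j * eval p (pderiv j f) = dd * eval p f := by
  have := congrArg (eval p) (euler_poly f hf)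
  simpa [nsmul_eq_mul, mul_comm] using this

/-- A matrix over `ℂ` has rank equal to the number of rows iff its rows are
linearly independent. -/
lemma rank_eq_card_iff_li {ι κ : Type*} [Fintype ι] [Fintype κ] (A : Matrix ι κ ℂ) :
    A.rank = Fintype.card ι ↔ LinearIndependent ℂ A := by
  have h : A.rank = Module.finrank ℂ (Submodule.span ℂ (Set.range A)) := by
    rw [← Matrix.rank_transpose A, Matrix.rank_eq_finrank_span_cols]; rfl
  rw [show LinearIndependent ℂ A ↔ _ from linearIndependent_iff_card_eq_finrank_span, Set.finrank, h]
  exact eq_comm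

lemma key_indep (n m : ℕ) (hn : 2 ≤ n) (hm : 1 ≤ m)
    (f : Fin m → Rp n) (d : Fin m → ℕ)
    (hfh : ∀ i, (f i).IsHomogeneous (d i)) (hd : ∀ i, 1 ≤ d i)
    (hsnc : SNC n m f) (p : Fin n → ℂ) (hp : p ≠ 0)
    (c : Fin m → ℂ)
    (h1 : ∀ k : Fin m, (k : ℕ) ≠ 0 → c k * eval p (f k) = 0)
    (h2 : ∀ j, ∑ i, c i * eval p (pderiv j (f i)) = 0) : c = 0 := by
  classical
  set E : Fin m → ℂ := fun i => eval p (f i) with hE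
  set G : Fin m → Fin n → ℂ := fun i j => eval p (pderiv j (f i)) with hG
  have heuler : ∀ i, ∑ j, p j * G i j = (d i : ℂ) * E i := fun i => euler_eval (f i) (hfh i) p
  set I : Finset (Fin m) := Finset.univ.filter (fun i => E i = 0) with hI
  have hmemI : ∀ i, i ∈ I ↔ E i = 0 := by intro i; simp [hI]
  -- |I| < n
  have hIcard : I.card < n := by
    by_contra hcon
    push_neg at hcon
    obtain ⟨J, hJI, hJcard⟩ := Finset.exists_subset_card_eq hcon
    have hrank := hsnc.2 J (by omega) (le_of_eq hJcard) p hp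
      (fun i hi => (hmemI i).mp (hJI hi))
    have hli : LinearIndependent ℂ
        (Matrix.of fun (i : J) (j : Fin n) => eval p (pderiv j (f i.1))).transpose := by
      refine (rank_eq_card_iff_li _).mp ?_
      rw [Matrix.rank_transpose, hrank, hJcard, Fintype.card_fin]
    have hz := Fintype.linearIndependent_iff.mp hli p ?_
    · exact hp (funext hz)
    · funext i
      simp only [Finset.sum_apply, Pi.smul_apply, Matrix.transpose_apply, Matrix.of_apply,
        smul_eq_mul, Pi.zero_apply]
      rw [heuler i.1, (hmemI i.1).mp (hJI i.2), mul_zero]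
  set z : Fin m := ⟨0, hm⟩ with hz
  have hcz : ∀ i, i ∉ I → i ≠ z → c i = 0 := by
    intro i hiI hiz
    have hEi : E i ≠ 0 := fun h => hiI ((hmemI i).mpr h)
    have hik : (i : ℕ) ≠ 0 := fun h => hiz (Fin.ext h)
    rcases mul_eq_zero.mp (h1 i hik) with h | h
    · exact h
    · exact absurd h hEi
  set I0 : Finset (Fin m) := insert z I with hI0
  have h2' : ∀ j, ∑ i ∈ I0, c i * G i j = 0 := by
    intro j
    rw [Finset.sum_subset (Finset.subset_univ I0)
      (fun x _ hx => by
        rw [hcz x (fun h => hx (Finset.mem_insert_of_mem h))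
          (fun h => hx (h ▸ Finset.mem_insert_self z I)), zero_mul])]
    exact h2 j
  have hsum : ∑ i ∈ I0, c i * ((d i : ℂ) * E i) = 0 := by
    calc ∑ i ∈ I0, c i * ((d i : ℂ) * E i)
        = ∑ i ∈ I0, c i * (∑ j, p j * G i j) := by
          refine Finset.sum_congr rfl fun i _ => by rw [heuler i]
      _ = ∑ i ∈ I0, ∑ j, p j * (c i * G i j) := by
          refine Finset.sum_congr rfl fun i _ => ?_
          rw [Finset.mul_sum]; refine Finset.sum_congr rfl fun j _ => by ring
      _ = ∑ j, p j * ∑ i ∈ I0, c i * G i j := by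
          rw [Finset.sum_comm]
          exact Finset.sum_congr rfl fun j _ => (Finset.mul_sum _ _ _).symm
      _ = 0 := by simp [h2']
  -- c z = 0 or z ∈ I, and relation over I
  have hIrel : (∀ j, ∑ i ∈ I, c i * G i j = 0) ∧ c z = 0 ∨
      (∀ j, ∑ i ∈ I, c i * G i j = 0) ∧ z ∈ I := by
    by_cases hzI : z ∈ I
    · right
      refine ⟨fun j => ?_, hzI⟩
      rw [← Finset.insert_eq_self.mpr hzI]
      exact h2' j
    · left
      have hcz0 : c z = 0 := by
        rw [Finset.sum_insert hzI] at hsum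
        have hrest : ∑ i ∈ I, c i * ((d i : ℂ) * E i) = 0 := by
          refine Finset.sum_eq_zero fun i hi => ?_
          rw [(hmemI i).mp hi, mul_zero, mul_zero]
        rw [hrest, add_zero] at hsum
        have hEz : E z ≠ 0 := fun h => hzI ((hmemI z).mpr h)
        have hdz : (d z : ℂ) ≠ 0 := Nat.cast_ne_zero.mpr (by have := hd z; omega)
        rcases mul_eq_zero.mp hsum with h | h
        · exact h
        · exact absurd h (mul_ne_zero hdz hEz)
      refine ⟨fun j => ?_, hcz0⟩
      have := h2' j
      rw [Finset.sum_insert hzI, hcz0, zero_mul, zero_add] at this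
      exact this
  have hrel : ∀ j, ∑ i ∈ I, c i * G i j = 0 := by
    rcases hIrel with ⟨h, _⟩ | ⟨h, _⟩ <;> exact h
  -- c vanishes on I, by SNC
  have hcI : ∀ i ∈ I, c i = 0 := by
    rcases Finset.eq_empty_or_nonempty I with hIe | hIne
    · intro i hi; rw [hIe] at hi; exact absurd hi (Finset.notMem_empty i)
    · have hrank := hsnc.2 I (Finset.card_pos.mpr hIne) hIcard.le p hp
        (fun i hi => (hmemI i).mp hi)
      have hli : LinearIndependent ℂ
          (Matrix.of fun (i : I) (j : Fin n) => eval p (pderiv j (f i.1))) :=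
        (rank_eq_card_iff_li _).mp (hrank.trans (Fintype.card_coe I).symm)
      intro i hi
      refine Fintype.linearIndependent_iff.mp hli (fun i : I => c i.1) ?_ ⟨i, hi⟩
      funext j
      simp only [Finset.sum_apply, Pi.smul_apply, Matrix.of_apply, smul_eq_mul, Pi.zero_apply]
      rw [Finset.sum_coe_sort I (fun i => c i * G i j)]
      exact hrel j
  funext i
  by_cases hiI : i ∈ I
  · exact hcI i hiI
  by_cases hiz : i = z
  · subst hiz
    rcases hIrel with ⟨_, h⟩ | ⟨_, hzI⟩
    · exact h
    · exact absurd hzI hiI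
  · exact hcz i hiI hiz


/-- Under the SNC hypothesis, `Q(p)` and `Q_{∖1}(p)` have rank `m` at every
`p ∈ ℂ^n ∖ {0}`. -/
theorem rank_Q_eq_m (n m : ℕ) (hn : 2 ≤ n) (hm : 1 ≤ m)
    (f : Fin m → Rp n) (d : Fin m → ℕ)
    (hf0 : ∀ i, f i ≠ 0) (hfh : ∀ i, (f i).IsHomogeneous (d i)) (hd : ∀ i, 1 ≤ d i)
    (hsnc : SNC n m f) :
    ∀ p : Fin n → ℂ, p ≠ 0 →
      (Matrix.of fun i c => eval p (Qmat n m f i c)).rank = m ∧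
      (Matrix.of fun i c => eval p (Q1 n m f i c)).rank = m := by
  intro p hp
  have hQ1li : LinearIndependent ℂ (Matrix.of fun i c => eval p (Q1 n m f i c)) := by
    refine Fintype.linearIndependent_iff.mpr fun g hg => ?_
    have h1 : ∀ k : Fin m, (k : ℕ) ≠ 0 → g k * eval p (f k) = 0 := by
      intro k hk
      have h := congrFun hg (Sum.inl ⟨k, hk⟩)
      simp only [Finset.sum_apply, Pi.smul_apply, Matrix.of_apply, smul_eq_mul,
        Pi.zero_apply, Q1] at h
      simpa [apply_ite (eval p), mul_ite, mul_zero, Finset.sum_ite_eq'] using h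
    have h2 : ∀ j, ∑ i, g i * eval p (pderiv j (f i)) = 0 := by
      intro j
      have h := congrFun hg (Sum.inr j)
      simpa [Q1] using h
    exact fun i => congrFun (key_indep n m hn hm f d hfh hd hsnc p hp g h1 h2) i
  have hQ1rank : (Matrix.of fun i c => eval p (Q1 n m f i c)).rank = m := by
    have := (rank_eq_card_iff_li (Matrix.of fun i c => eval p (Q1 n m f i c))).mpr hQ1li
    rwa [Fintype.card_fin] at this
  refine ⟨?_, hQ1rank⟩
  have hQli : LinearIndependent ℂ (Matrix.of fun i c => eval p (Qmat n m f i c)) := by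
    apply LinearIndependent.of_comp (LinearMap.funLeft ℂ ℂ
      ((Sum.elim (fun k : {k : Fin m // (k : ℕ) ≠ 0} => Sum.inl k.1) Sum.inr) :
        Col n m → Fin m ⊕ Fin n))
    have hcomp : (LinearMap.funLeft ℂ ℂ
        ((Sum.elim (fun k : {k : Fin m // (k : ℕ) ≠ 0} => Sum.inl k.1) Sum.inr) :
          Col n m → Fin m ⊕ Fin n)) ∘ (Matrix.of fun i c => eval p (Qmat n m f i c))
        = (Matrix.of fun i c => eval p (Q1 n m f i c)) := by
      funext i c
      cases c with
      | inl k => rfl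
      | inr j => rfl
    rw [hcomp]
    exact hQ1li
  have := (rank_eq_card_iff_li (Matrix.of fun i c => eval p (Qmat n m f i c))).mpr hQli
  rwa [Fintype.card_fin] at this
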